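/- arXiv:1507.07535 — 10 statements merged into one kernel-verified Lean document; each statement's English description precedes it below -/
import Mathlib

section
/- For all x₁, x₂ ∈ ℝ, the joint cumulative distribution function of (X₁, X₂) satisfies ℙ({ω : X₁(ω) ≤ x₁ and X₂(ω) ≤ x₂}) = G(x₁)^{α₁} · G(x₂)^{α₂} · G(min(x₁, x₂))^{α₃}. -/
open MeasureTheory ProbabilityTheory Real

/-! Since `max a c ≤ x₁ ∧ max b c ≤ x₂` means `a ≤ x₁ ∧ b ≤ x₂ ∧ c ≤ min x₁ x₂`, the event is an
intersection of one sublevel event per `Uᵢ`; independence factors its probability into the three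
marginal cdfs, and the real powers combine under `ENNReal.ofReal` because `G ≥ 0`. -/

section MaxCDF

variable {Ω β : Type*} [LinearOrder β]

theorem setOf_max_le_and_max_le_eq_iInter (U : Fin 3 → Ω → β) (x₁ x₂ : β) :
    {ω | max (U 0 ω) (U 2 ω) ≤ x₁ ∧ max (U 1 ω) (U 2 ω) ≤ x₂} =
      ⋂ i, U i ⁻¹' Set.Iic (![x₁, x₂, min x₁ x₂] i) := by
  ext ω
  simp only [Set.mem_ofPred_eq, Set.mem_iInter, Set.mem_preimage, Set.mem_Iic, max_le_iff,
    le_min_iff, Fin.forall_fin_succ, Matrix.cons_val_zero, Matrix.cons_val_succ,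
    Fin.succ_zero_eq_one, Fin.succ_one_eq_two, IsEmpty.forall_iff, and_true]
  tauto

variable [TopologicalSpace β] [OrderClosedTopology β] [MeasurableSpace β]
  [OpensMeasurableSpace β] [MeasurableSpace Ω]

theorem ProbabilityTheory.iIndepFun.measure_max_le_and_max_le {P : Measure Ω} {U : Fin 3 → Ω → β}
    (hindep : iIndepFun U P) (x₁ x₂ : β) :
    P {ω | max (U 0 ω) (U 2 ω) ≤ x₁ ∧ max (U 1 ω) (U 2 ω) ≤ x₂} =
      P {ω | U 0 ω ≤ x₁} * P {ω | U 1 ω ≤ x₂} * P {ω | U 2 ω ≤ min x₁ x₂} := by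
  rw [setOf_max_le_and_max_le_eq_iInter,
    hindep.meas_iInter fun i ↦ ⟨_, measurableSet_Iic, rfl⟩, Fin.prod_univ_three]
  rfl

end MaxCDF

theorem one_sub_exp_neg_mul_nonneg {a b : ℝ} (ha : 0 ≤ a) (hb : 0 ≤ b) :
    0 ≤ 1 - Real.exp (-a * b) := by
  rw [sub_nonneg, Real.exp_le_one_iff, neg_mul, neg_nonpos]
  exact mul_nonneg ha hb

theorem beew_joint_cdf_general
    {Ω : Type*} [MeasurableSpace Ω] (P : Measure Ω)
    (lam : ℝ) (hlam : 0 < lam)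
    (α : Fin 3 → ℝ)
    (H : ℝ → ℝ) (hH : ∀ x, 0 ≤ H x)
    (U : Fin 3 → Ω → ℝ)
    (hindep : iIndepFun U P)
    (hcdf : ∀ i x, P {ω | U i ω ≤ x} =
      ENNReal.ofReal ((1 - Real.exp (-lam * H x)) ^ (α i)))
    (x₁ x₂ : ℝ) :
    P {ω | max (U 0 ω) (U 2 ω) ≤ x₁ ∧ max (U 1 ω) (U 2 ω) ≤ x₂} =
      ENNReal.ofReal ((1 - Real.exp (-lam * H x₁)) ^ α 0 *
        (1 - Real.exp (-lam * H x₂)) ^ α 1 *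
        (1 - Real.exp (-lam * H (min x₁ x₂))) ^ α 2) := by
  have hG : ∀ x, 0 ≤ 1 - Real.exp (-lam * H x) :=
    fun x ↦ one_sub_exp_neg_mul_nonneg hlam.le (hH x)
  rw [hindep.measure_max_le_and_max_le, hcdf, hcdf, hcdf,
    ← ENNReal.ofReal_mul (rpow_nonneg (hG _) _),
    ← ENNReal.ofReal_mul (mul_nonneg (rpow_nonneg (hG _) _) (rpow_nonneg (hG _) _))]

/-- The joint cdf of `(X₁, X₂)` with `X₁ = max (U 0) (U 2)`,
`X₂ = max (U 1) (U 2)` satisfies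
`P(X₁ ≤ x₁, X₂ ≤ x₂) = G(x₁)^α₁ · G(x₂)^α₂ · G(min x₁ x₂)^α₃`. -/
theorem beew_joint_cdf
    {Ω : Type*} [MeasurableSpace Ω] (P : Measure Ω) [IsProbabilityMeasure P]
    (lam : ℝ) (hlam : 0 < lam)
    (α : Fin 3 → ℝ) (hα : ∀ i, 0 < α i)
    (H : ℝ → ℝ) (hH : ∀ x, 0 ≤ H x)
    (U : Fin 3 → Ω → ℝ) (hUmeas : ∀ i, Measurable (U i))
    (hindep : iIndepFun U P)
    (hcdf : ∀ i x, P {ω | U i ω ≤ x} =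
      ENNReal.ofReal ((1 - Real.exp (-lam * H x)) ^ (α i)))
    (x₁ x₂ : ℝ) :
    P {ω | max (U 0 ω) (U 2 ω) ≤ x₁ ∧ max (U 1 ω) (U 2 ω) ≤ x₂} =
      ENNReal.ofReal ((1 - Real.exp (-lam * H x₁)) ^ α 0 *
        (1 - Real.exp (-lam * H x₂)) ^ α 1 *
        (1 - Real.exp (-lam * H (min x₁ x₂))) ^ α 2) :=
  beew_joint_cdf_general P lam hlam α H hH U hindep hcdf x₁ x₂
end

section
/- For every t ∈ ℝ, the random variable T = min(X₁, X₂) satisfies ℙ(T ≤ t) = G(t)^{α₁+α₃} + G(t)^{α₂+α₃} − G(t)^{α₁+α₂+α₃}. -/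
/-!
Since `min (max a c) (max b c) = max (min a b) c`, the event `T ≤ t` is
`{U₃ ≤ t} ∩ ({U₁ ≤ t} ∪ {U₂ ≤ t})`. Independence factors its probability as
`G^α₃ · (G^α₁ + G^α₂ − G^α₁ G^α₂)`, which expands to the claimed formula.
-/

open MeasureTheory ProbabilityTheory Real

namespace ProbabilityTheory

variable {Ω : Type*} [MeasurableSpace Ω] {μ : Measure Ω} {X Y : Ω → ℝ}

lemma IndepFun.measureReal_max_le (hXY : IndepFun X Y μ) (t : ℝ) :
    μ.real {ω | max (X ω) (Y ω) ≤ t} = μ.real {ω | X ω ≤ t} * μ.real {ω | Y ω ≤ t} := by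
  have h := hXY.measure_inter_preimage_eq_mul (Set.Iic t) (Set.Iic t) measurableSet_Iic
    measurableSet_Iic
  have hset : {ω | max (X ω) (Y ω) ≤ t} = X ⁻¹' Set.Iic t ∩ Y ⁻¹' Set.Iic t := by
    ext ω; simp
  rw [measureReal_def, hset, h, ENNReal.toReal_mul]
  rfl

lemma IndepFun.measureReal_min_le [IsFiniteMeasure μ] (hXY : IndepFun X Y μ)
    (hY : Measurable Y) (t : ℝ) :
    μ.real {ω | min (X ω) (Y ω) ≤ t} = μ.real {ω | X ω ≤ t} + μ.real {ω | Y ω ≤ t} -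
      μ.real {ω | X ω ≤ t} * μ.real {ω | Y ω ≤ t} := by
  have hunion : {ω | min (X ω) (Y ω) ≤ t} = {ω | X ω ≤ t} ∪ {ω | Y ω ≤ t} := by
    ext ω; simp
  have hinter : {ω | max (X ω) (Y ω) ≤ t} = {ω | X ω ≤ t} ∩ {ω | Y ω ≤ t} := by
    ext ω; simp
  rw [← hXY.measureReal_max_le, eq_sub_iff_add_eq, hunion, hinter]
  exact measureReal_union_add_inter (measurableSet_le hY measurable_const)

end ProbabilityTheory

/-- The cdf of `T = min (X₁, X₂)` is
`G(t)^(α₁+α₃) + G(t)^(α₂+α₃) − G(t)^(α₁+α₂+α₃)`. -/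
theorem beew_min_cdf
    {Ω : Type*} [MeasurableSpace Ω] (P : Measure Ω) [IsProbabilityMeasure P]
    (lam : ℝ) (hlam : 0 < lam)
    (α : Fin 3 → ℝ) (hα : ∀ i, 0 < α i)
    (H : ℝ → ℝ) (hH : ∀ x, 0 ≤ H x)
    (U : Fin 3 → Ω → ℝ) (hUmeas : ∀ i, Measurable (U i))
    (hindep : iIndepFun U P)
    (hcdf : ∀ i x, P {ω | U i ω ≤ x} =
      ENNReal.ofReal ((1 - Real.exp (-lam * H x)) ^ (α i)))
    (t : ℝ) :
    P {ω | min (max (U 0 ω) (U 2 ω)) (max (U 1 ω) (U 2 ω)) ≤ t} =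
      ENNReal.ofReal ((1 - Real.exp (-lam * H t)) ^ (α 0 + α 2) +
        (1 - Real.exp (-lam * H t)) ^ (α 1 + α 2) -
        (1 - Real.exp (-lam * H t)) ^ (α 0 + α 1 + α 2)) := by
  set G := 1 - Real.exp (-lam * H t)
  have hG : 0 ≤ G := by
    have := mul_nonneg hlam.le (hH t)
    exact sub_nonneg.2 (exp_le_one_iff.2 (by linarith))
  have hF (i : Fin 3) : P.real {ω | U i ω ≤ t} = G ^ α i := by
    rw [measureReal_def, hcdf, ENNReal.toReal_ofReal (rpow_nonneg hG _)]
  have hadd (i j : Fin 3) : G ^ (α i + α j) = G ^ α i * G ^ α j :=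
    rpow_add_of_nonneg hG (hα i).le (hα j).le
  have hindep_pair : IndepFun (U 0) (U 1) P := hindep.indepFun (by decide)
  have hindep_min : IndepFun (fun ω ↦ min (U 0 ω) (U 1 ω)) (U 2) P :=
    (hindep.indepFun_prodMk hUmeas 0 1 2 (by decide) (by decide)).comp
      (measurable_fst.min measurable_snd) measurable_id
  simp only [← max_min_distrib_right]
  rw [← ofReal_measureReal, hindep_min.measureReal_max_le,
    hindep_pair.measureReal_min_le (hUmeas 1), hF, hF, hF, hadd, hadd,
    rpow_add_of_nonneg hG (add_pos (hα 0) (hα 1)).le (hα 2).le, hadd]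
  ring_nf
end

section
/- Fix 0 < x₁ < x₂ and reals h₁, h₂. Assume H is monotone increasing, H(x₁) > 0, H(x₂) > 0, H has derivative h₁ at x₁ and derivative h₂ at x₂ (in the sense of HasDerivAt). Then the mixed second partial derivative of F on the region below the diagonal, namely deriv (fun y₂ => deriv (fun y₁ => F(y₁, y₂)) x₁) x₂, equals (α₁+α₃)·α₂·λ²·h₁·h₂·G(x₁)^{α₁+α₃−1}·G(x₂)^{α₂−1}·exp(−λ·H(x₁) − λ·H(x₂)). -/
open Real Filter Topology

/- Below the diagonal `min y₁ y₂ = y₁` for `y₁` near `x₁`, so there `F(·, y₂)` is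
`G ^ (α₁ + α₃) · G(y₂) ^ α₂`; differentiating in `y₁` leaves a constant times
`G(y₂) ^ α₂`, which is then differentiated in `y₂`. -/

theorem hasDerivAt_one_sub_exp_neg_mul (lam : ℝ) {H : ℝ → ℝ} {h x : ℝ}
    (hd : HasDerivAt H h x) :
    HasDerivAt (fun y => 1 - exp (-lam * H y)) (lam * h * exp (-lam * H x)) x := by
  refine (((hd.const_mul (-lam)).exp).const_sub 1).congr_deriv ?_
  ring

theorem one_sub_exp_neg_mul_pos {lam t : ℝ} (hlam : 0 < lam) (ht : 0 < t) :
    0 < 1 - exp (-lam * t) :=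
  sub_pos.2 (exp_lt_one_iff.2 (by nlinarith))

theorem HasDerivAt.rpow_mul_rpow_min_of_lt {g : ℝ → ℝ} {g' x y : ℝ}
    (hg : HasDerivAt g g' x) (hx : 0 < g x) (hxy : x < y) (a b c : ℝ) :
    HasDerivAt (fun t => g t ^ a * c * g (min t y) ^ b)
      ((a + b) * g x ^ (a + b - 1) * g' * c) x := by
  have hmerge :
      (fun t => g t ^ (a + b) * c) =ᶠ[𝓝 x] fun t => g t ^ a * c * g (min t y) ^ b := by
    filter_upwards [Iio_mem_nhds hxy, hg.continuousAt.eventually (lt_mem_nhds hx)]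
      with t hty hgt
    rw [min_eq_left hty.le, rpow_add hgt]
    ring
  refine (((hg.rpow_const (Or.inl hx.ne')).mul_const c).congr_of_eventuallyEq
    hmerge.symm).congr_deriv ?_
  ring

theorem beew_density_below_diagonal_general
    (lam α₁ α₂ α₃ : ℝ) (hlam : 0 < lam)
    (H : ℝ → ℝ)
    (x₁ x₂ h₁ h₂ : ℝ) (hx₁₂ : x₁ < x₂)
    (hH₁ : 0 < H x₁) (hH₂ : 0 < H x₂)
    (hd₁ : HasDerivAt H h₁ x₁) (hd₂ : HasDerivAt H h₂ x₂) :
    deriv (fun y₂ => deriv (fun y₁ =>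
        (1 - Real.exp (-lam * H y₁)) ^ α₁ * (1 - Real.exp (-lam * H y₂)) ^ α₂ *
          (1 - Real.exp (-lam * H (min y₁ y₂))) ^ α₃) x₁) x₂ =
      (α₁ + α₃) * α₂ * lam ^ (2 : ℕ) * h₁ * h₂ *
        (1 - Real.exp (-lam * H x₁)) ^ (α₁ + α₃ - 1) *
        (1 - Real.exp (-lam * H x₂)) ^ (α₂ - 1) *
        Real.exp (-lam * H x₁ - lam * H x₂) := by
  set G : ℝ → ℝ := fun y => 1 - exp (-lam * H y)
  have hG₁ := hasDerivAt_one_sub_exp_neg_mul lam hd₁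
  have hG₂ := hasDerivAt_one_sub_exp_neg_mul lam hd₂
  set C := (α₁ + α₃) * G x₁ ^ (α₁ + α₃ - 1) * (lam * h₁ * exp (-lam * H x₁))
  have hGpos₁ : 0 < G x₁ := one_sub_exp_neg_mul_pos hlam hH₁
  have hinner :
      (fun y₂ => deriv (fun y₁ => G y₁ ^ α₁ * G y₂ ^ α₂ * G (min y₁ y₂) ^ α₃) x₁)
        =ᶠ[𝓝 x₂] fun y₂ => C * G y₂ ^ α₂ := by
    filter_upwards [Ioi_mem_nhds hx₁₂] with y₂ hy₂
    exact (hG₁.rpow_mul_rpow_min_of_lt hGpos₁ hy₂ α₁ α₃ _).deriv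
  have hGpos₂ : 0 < G x₂ := one_sub_exp_neg_mul_pos hlam hH₂
  rw [hinner.deriv_eq, ((hG₂.rpow_const (Or.inl hGpos₂.ne')).const_mul C).deriv,
    show -lam * H x₁ - lam * H x₂ = -lam * H x₁ + -lam * H x₂ by ring, exp_add]
  ring

/-- Below the diagonal (`0 < x₁ < x₂`), the mixed second partial
derivative of the BEEW joint cdf equals
`(α₁+α₃)·α₂·λ²·h₁·h₂·G(x₁)^(α₁+α₃−1)·G(x₂)^(α₂−1)·exp(−λH(x₁)−λH(x₂))`. -/
theorem beew_density_below_diagonal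
    (lam α₁ α₂ α₃ : ℝ) (hlam : 0 < lam)
    (hα₁ : 0 < α₁) (hα₂ : 0 < α₂) (hα₃ : 0 < α₃)
    (H : ℝ → ℝ) (hH : ∀ x, 0 ≤ H x) (hHmono : Monotone H)
    (x₁ x₂ h₁ h₂ : ℝ) (hx₁ : 0 < x₁) (hx₁₂ : x₁ < x₂)
    (hH₁ : 0 < H x₁) (hH₂ : 0 < H x₂)
    (hd₁ : HasDerivAt H h₁ x₁) (hd₂ : HasDerivAt H h₂ x₂) :
    deriv (fun y₂ => deriv (fun y₁ =>
        (1 - Real.exp (-lam * H y₁)) ^ α₁ * (1 - Real.exp (-lam * H y₂)) ^ α₂ *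
          (1 - Real.exp (-lam * H (min y₁ y₂))) ^ α₃) x₁) x₂ =
      (α₁ + α₃) * α₂ * lam ^ (2 : ℕ) * h₁ * h₂ *
        (1 - Real.exp (-lam * H x₁)) ^ (α₁ + α₃ - 1) *
        (1 - Real.exp (-lam * H x₂)) ^ (α₂ - 1) *
        Real.exp (-lam * H x₁ - lam * H x₂) :=
  beew_density_below_diagonal_general lam α₁ α₂ α₃ hlam H x₁ x₂ h₁ h₂ hx₁₂ hH₁ hH₂ hd₁ hd₂
end

section
/- The integral over (0, ∞) of the singular-part density f₀ equals α₃/(α₁+α₂+α₃); that is, ∫_{x ∈ (0,∞)} α₃·λ·h(x)·exp(−λ·H(x))·(1 − exp(−λ·H(x)))^{α₁+α₂+α₃−1} dx = α₃/(α₁+α₂+α₃). -/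
open MeasureTheory Real Filter Set Topology

/-!
Up to the factor `α₃ / α` with `α = α₁ + α₂ + α₃`, the integrand is the derivative of the
distribution function `F x = (1 - exp (-λ H x)) ^ α`, which is nondecreasing, vanishes at `0` and
tends to `1` at infinity; so the integral is `α₃ / α * (1 - 0)`.
-/

lemma one_sub_exp_neg_mul_ne_zero {c t : ℝ} (h : c * t ≠ 0) : 1 - exp (-c * t) ≠ 0 := by
  rw [sub_ne_zero, ne_comm, Ne, exp_eq_one_iff, neg_mul, neg_eq_zero]
  exact h

lemma hasDerivAt_one_sub_exp_neg_mul_rpow {H : ℝ → ℝ} {h c α x : ℝ} (hH : HasDerivAt H h x)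
    (hx : c * H x ≠ 0) :
    HasDerivAt (fun y => (1 - exp (-c * H y)) ^ α)
      (α * c * h * exp (-c * H x) * (1 - exp (-c * H x)) ^ (α - 1)) x := by
  have hinner : HasDerivAt (fun y => 1 - exp (-c * H y)) (c * h * exp (-c * H x)) x :=
    (((hH.const_mul (-c)).exp).const_sub 1).congr_deriv (by ring)
  exact (hinner.rpow_const (Or.inl (one_sub_exp_neg_mul_ne_zero hx))).congr_deriv (by ring)

lemma tendsto_one_sub_exp_neg_mul_rpow {ι : Type*} {l : Filter ι} {H : ι → ℝ} {c : ℝ}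
    (α : ℝ) (hc : 0 < c) (hH : Tendsto H l atTop) :
    Tendsto (fun x => (1 - exp (-c * H x)) ^ α) l (𝓝 1) := by
  have hexp : Tendsto (fun x => exp (-c * H x)) l (𝓝 0) :=
    tendsto_exp_atBot.comp ((tendsto_const_mul_atBot_of_neg (neg_neg_of_pos hc)).2 hH)
  have hF : Tendsto (fun x => 1 - exp (-c * H x)) l (𝓝 1) := by
    simpa using tendsto_const_nhds.sub hexp
  simpa using hF.rpow_const (Or.inl one_ne_zero) (p := α)

theorem integral_Ioi_deriv_one_sub_exp_neg_mul_rpow {H h : ℝ → ℝ} {a c α : ℝ} (hc : 0 < c)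
    (hα : 0 < α) (hmono : Monotone H) (hHa : H a = 0) (hcont : ContinuousAt H a)
    (hpos : ∀ x, a < x → 0 < H x) (hd : ∀ x, a < x → HasDerivAt H (h x) x)
    (htop : Tendsto H atTop atTop) :
    ∫ x in Ioi a, α * c * h x * exp (-c * H x) * (1 - exp (-c * H x)) ^ (α - 1) = 1 := by
  have hFcont : ContinuousAt (fun x => (1 - exp (-c * H x)) ^ α) a :=
    ((continuous_exp.continuousAt.comp (continuousAt_const.mul hcont)).const_sub 1).rpow_const
      (Or.inr hα.le)
  have hderiv : ∀ x ∈ Ioi a, HasDerivAt (fun x => (1 - exp (-c * H x)) ^ α)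
      (α * c * h x * exp (-c * H x) * (1 - exp (-c * H x)) ^ (α - 1)) x := fun x hx =>
    hasDerivAt_one_sub_exp_neg_mul_rpow (hd x hx) (mul_pos hc (hpos x hx)).ne'
  have hnonneg : ∀ x ∈ Ioi a,
      0 ≤ α * c * h x * exp (-c * H x) * (1 - exp (-c * H x)) ^ (α - 1) := fun x hx => by
    have hh : 0 ≤ h x := (hd x hx).deriv ▸ hmono.deriv_nonneg
    have hF : 0 ≤ 1 - exp (-c * H x) := by
      rw [sub_nonneg, exp_le_one_iff, neg_mul, neg_nonpos]
      exact (mul_pos hc (hpos x hx)).le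
    positivity
  rw [integral_Ioi_of_hasDerivAt_of_nonneg hFcont.continuousWithinAt hderiv hnonneg
    (tendsto_one_sub_exp_neg_mul_rpow α hc htop)]
  simp [hHa, zero_rpow hα.ne']

theorem beew_singular_part_mass_general
    (lam α₁ α₂ α₃ : ℝ) (hlam : 0 < lam)
    (hα₁ : 0 < α₁) (hα₂ : 0 < α₂) (hα₃ : 0 < α₃)
    (H h : ℝ → ℝ) (hHmono : Monotone H)
    (hH0 : H 0 = 0) (hHcont0 : ContinuousAt H 0)
    (hHpos : ∀ x : ℝ, 0 < x → 0 < H x)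
    (hd : ∀ x : ℝ, 0 < x → HasDerivAt H (h x) x)
    (hHtop : Tendsto H atTop atTop) :
    ∫ x in Set.Ioi (0 : ℝ),
        α₃ * lam * h x * Real.exp (-lam * H x) *
          (1 - Real.exp (-lam * H x)) ^ (α₁ + α₂ + α₃ - 1) =
      α₃ / (α₁ + α₂ + α₃) := by
  set α := α₁ + α₂ + α₃
  have hα : 0 < α := by positivity
  calc ∫ x in Ioi 0, α₃ * lam * h x * exp (-lam * H x) * (1 - exp (-lam * H x)) ^ (α - 1)
      = ∫ x in Ioi 0, α₃ / α *
          (α * lam * h x * exp (-lam * H x) * (1 - exp (-lam * H x)) ^ (α - 1)) := by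
        congr 1 with x
        field_simp
    _ = α₃ / α := by
        rw [integral_const_mul, integral_Ioi_deriv_one_sub_exp_neg_mul_rpow hlam hα hHmono hH0
          hHcont0 hHpos hd hHtop, mul_one]

/-- The integral of the singular-part density `f₀` over `(0,∞)`
equals `α₃/(α₁+α₂+α₃)`. -/
theorem beew_singular_part_mass
    (lam α₁ α₂ α₃ : ℝ) (hlam : 0 < lam)
    (hα₁ : 0 < α₁) (hα₂ : 0 < α₂) (hα₃ : 0 < α₃)
    (H h : ℝ → ℝ) (hH : ∀ x, 0 ≤ H x) (hHmono : Monotone H)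
    (hH0 : H 0 = 0) (hHcont0 : ContinuousAt H 0)
    (hHpos : ∀ x : ℝ, 0 < x → 0 < H x)
    (hd : ∀ x : ℝ, 0 < x → HasDerivAt H (h x) x)
    (hHtop : Tendsto H atTop atTop) :
    ∫ x in Set.Ioi (0 : ℝ),
        α₃ * lam * h x * Real.exp (-lam * H x) *
          (1 - Real.exp (-lam * H x)) ^ (α₁ + α₂ + α₃ - 1) =
      α₃ / (α₁ + α₂ + α₃) :=
  beew_singular_part_mass_general lam α₁ α₂ α₃ hlam hα₁ hα₂ hα₃ H h hHmono hH0 hHcont0 hHpos hd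
    hHtop
end

section
/- ∫_{x₂ ∈ (0,∞)} ( ∫_{x₁ ∈ (0, x₂)} f₁(x₁, x₂) dx₁ ) dx₂ = α₂/(α₁+α₂+α₃), where f₁(x₁, x₂) = (α₁+α₃)·α₂·λ²·h(x₁)·h(x₂)·(1 − exp(−λ·H(x₁)))^{α₁+α₃−1}·(1 − exp(−λ·H(x₂)))^{α₂−1}·exp(−λ·H(x₁) − λ·H(x₂)). -/
/-!
With `F_β = (1 - exp (-lam * H))^β` and `f_β = F_β'`, the integrand is
`f_{α₁+α₃}(x₁) f_{α₂}(x₂)`. The inner integral is `F_{α₁+α₃}(x₂) f_{α₂}(x₂)`, and since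
`F_β f_α = α / (α + β) · f_{α+β}`, the outer integral is `α₂ / (α₁+α₂+α₃)` times the total mass
`F_s(∞) - F_s(0) = 1` of `f_s`. The densities are nonnegative because `H` is monotone, so both
integrals are integrals of nonnegative derivatives and need no separate integrability argument.
-/

open MeasureTheory Real Filter

/-- For `H' = h` and `β > 0` these are the distribution function and the density of the
exponentiated distribution with cumulative hazard `lam * H`. -/
noncomputable def exponentiatedCDF (lam : ℝ) (H : ℝ → ℝ) (β x : ℝ) : ℝ :=
  (1 - exp (-lam * H x)) ^ β

noncomputable def exponentiatedPDF (lam : ℝ) (H h : ℝ → ℝ) (β x : ℝ) : ℝ :=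
  β * lam * h x * (1 - exp (-lam * H x)) ^ (β - 1) * exp (-lam * H x)

lemma MeasureTheory.integral_Ioo_of_hasDerivAt_of_nonneg {g g' : ℝ → ℝ} {a b : ℝ} (hab : a ≤ b)
    (hcont : ContinuousOn g (Set.Icc a b)) (hderiv : ∀ x ∈ Set.Ioo a b, HasDerivAt g (g' x) x)
    (hg' : ∀ x ∈ Set.Ioo a b, 0 ≤ g' x) :
    ∫ x in Set.Ioo a b, g' x = g b - g a := by
  have hint : IntervalIntegrable g' volume a b :=
    (intervalIntegrable_iff_integrableOn_Ioc_of_le hab).2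
      (intervalIntegral.integrableOn_deriv_of_nonneg hcont hderiv hg')
  rw [← integral_Ioc_eq_integral_Ioo, ← intervalIntegral.integral_of_le hab,
    intervalIntegral.integral_eq_sub_of_hasDerivAt_of_le hab hcont hderiv hint]

lemma continuousOn_Ici_of_hasDerivAt {H h : ℝ → ℝ} {a : ℝ} (ha : ContinuousAt H a)
    (hd : ∀ x, a < x → HasDerivAt H (h x) x) : ContinuousOn H (Set.Ici a) := by
  intro x hx
  rcases (Set.mem_Ici.1 hx).eq_or_lt with rfl | hax
  · exact ha.continuousWithinAt
  · exact (hd x hax).continuousAt.continuousWithinAt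

lemma one_sub_exp_neg_mul_pos_s8 {a b : ℝ} (hab : 0 < a * b) : 0 < 1 - exp (-a * b) := by
  rw [neg_mul]
  exact sub_pos.2 (exp_lt_one_iff.2 (neg_neg_of_pos hab))

section Exponentiated

variable {lam : ℝ} {H h : ℝ → ℝ}

lemma exponentiatedCDF_of_eq_zero {β x : ℝ} (hβ : β ≠ 0) (hx : H x = 0) :
    exponentiatedCDF lam H β x = 0 := by
  simp [exponentiatedCDF, hx, zero_rpow hβ]

lemma hasDerivAt_exponentiatedCDF (β : ℝ) {x : ℝ} (hx : 0 < lam * H x)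
    (hd : HasDerivAt H (h x) x) :
    HasDerivAt (exponentiatedCDF lam H β) (exponentiatedPDF lam H h β x) x := by
  have hu : HasDerivAt (fun y => 1 - exp (-lam * H y)) (lam * h x * exp (-lam * H x)) x :=
    ((hd.const_mul (-lam)).exp.const_sub 1).congr_deriv (by ring)
  have hpdf : exponentiatedPDF lam H h β x =
      β * (1 - exp (-lam * H x)) ^ (β - 1) * (lam * h x * exp (-lam * H x)) := by
    rw [exponentiatedPDF]
    ring
  rw [hpdf]
  exact (hasDerivAt_rpow_const (Or.inl (one_sub_exp_neg_mul_pos_s8 hx).ne')).comp x hu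

lemma exponentiatedPDF_nonneg {β x : ℝ} (hlam : 0 ≤ lam) (hβ : 0 ≤ β) (hx : 0 ≤ lam * H x)
    (hhx : 0 ≤ h x) : 0 ≤ exponentiatedPDF lam H h β x := by
  have hu : 0 ≤ 1 - exp (-lam * H x) := by
    rw [sub_nonneg, exp_le_one_iff, neg_mul, neg_nonpos]
    exact hx
  unfold exponentiatedPDF
  have := rpow_nonneg hu (β - 1)
  positivity

lemma ContinuousOn.exponentiatedCDF {s : Set ℝ} {β : ℝ} (hH : ContinuousOn H s) (hβ : 0 ≤ β) :
    ContinuousOn (exponentiatedCDF lam H β) s :=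
  (continuousOn_const.sub (continuous_exp.comp_continuousOn (continuousOn_const.mul hH))).rpow_const
    fun _ _ => Or.inr hβ

lemma tendsto_exponentiatedCDF_atTop (hlam : 0 < lam) (hH : Tendsto H atTop atTop) (β : ℝ) :
    Tendsto (exponentiatedCDF lam H β) atTop (nhds 1) := by
  unfold exponentiatedCDF
  have hexp : Tendsto (fun y => exp (-lam * H y)) atTop (nhds 0) := by
    simp only [neg_mul]
    exact tendsto_exp_atBot.comp (tendsto_neg_atTop_atBot.comp (hH.const_mul_atTop hlam))
  have hu : Tendsto (fun y => 1 - exp (-lam * H y)) atTop (nhds 1) := by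
    simpa using hexp.const_sub 1
  simpa [Function.comp_def, one_rpow] using
    (continuousAt_rpow_const 1 β (Or.inl one_ne_zero)).tendsto.comp hu

lemma exponentiatedCDF_mul_exponentiatedPDF {α β x : ℝ} (hx : 0 < lam * H x) (hαβ : β + α ≠ 0) :
    exponentiatedCDF lam H β x * exponentiatedPDF lam H h α x =
      α / (β + α) * exponentiatedPDF lam H h (β + α) x := by
  simp only [exponentiatedCDF, exponentiatedPDF, add_sub_assoc,
    rpow_add (one_sub_exp_neg_mul_pos_s8 hx)]
  field_simp

lemma integral_Ioo_exponentiatedPDF (hlam : 0 < lam) (hHmono : Monotone H) (hH0 : H 0 = 0)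
    (hHcont0 : ContinuousAt H 0) (hHpos : ∀ x, 0 < x → 0 < H x)
    (hd : ∀ x, 0 < x → HasDerivAt H (h x) x) {β b : ℝ} (hβ : 0 < β) (hb : 0 ≤ b) :
    ∫ x in Set.Ioo 0 b, exponentiatedPDF lam H h β x = exponentiatedCDF lam H β b := by
  rw [integral_Ioo_of_hasDerivAt_of_nonneg hb
    (((continuousOn_Ici_of_hasDerivAt hHcont0 hd).exponentiatedCDF hβ.le).mono
      Set.Icc_subset_Ici_self)
    (fun x hx => hasDerivAt_exponentiatedCDF β (mul_pos hlam (hHpos x hx.1)) (hd x hx.1))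
    (fun x hx => exponentiatedPDF_nonneg hlam.le hβ.le (mul_pos hlam (hHpos x hx.1)).le
      ((hd x hx.1).nonneg_of_monotone hHmono)),
    exponentiatedCDF_of_eq_zero hβ.ne' hH0, sub_zero]

lemma integral_Ioi_exponentiatedPDF (hlam : 0 < lam) (hHmono : Monotone H) (hH0 : H 0 = 0)
    (hHcont0 : ContinuousAt H 0) (hHpos : ∀ x, 0 < x → 0 < H x)
    (hd : ∀ x, 0 < x → HasDerivAt H (h x) x) (hHtop : Tendsto H atTop atTop) {β : ℝ}
    (hβ : 0 < β) :
    ∫ x in Set.Ioi 0, exponentiatedPDF lam H h β x = 1 := by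
  rw [integral_Ioi_of_hasDerivAt_of_nonneg
    (((continuousOn_Ici_of_hasDerivAt hHcont0 hd).exponentiatedCDF hβ.le) 0 Set.self_mem_Ici)
    (fun x hx => hasDerivAt_exponentiatedCDF β (mul_pos hlam (hHpos x hx)) (hd x hx))
    (fun x hx => exponentiatedPDF_nonneg hlam.le hβ.le (mul_pos hlam (hHpos x hx)).le
      ((hd x hx).nonneg_of_monotone hHmono))
    (tendsto_exponentiatedCDF_atTop hlam hHtop β),
    exponentiatedCDF_of_eq_zero hβ.ne' hH0, sub_zero]

end Exponentiated

theorem beew_f1_mass_general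
    (lam α₁ α₂ α₃ : ℝ) (hlam : 0 < lam)
    (hα₁ : 0 < α₁) (hα₂ : 0 < α₂) (hα₃ : 0 < α₃)
    (H h : ℝ → ℝ) (hHmono : Monotone H)
    (hH0 : H 0 = 0) (hHcont0 : ContinuousAt H 0)
    (hHpos : ∀ x : ℝ, 0 < x → 0 < H x)
    (hd : ∀ x : ℝ, 0 < x → HasDerivAt H (h x) x)
    (hHtop : Tendsto H atTop atTop) :
    ∫ x₂ in Set.Ioi (0 : ℝ), ∫ x₁ in Set.Ioo (0 : ℝ) x₂,
        (α₁ + α₃) * α₂ * lam ^ (2 : ℕ) * h x₁ * h x₂ *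
          (1 - Real.exp (-lam * H x₁)) ^ (α₁ + α₃ - 1) *
          (1 - Real.exp (-lam * H x₂)) ^ (α₂ - 1) *
          Real.exp (-lam * H x₁ - lam * H x₂) =
      α₂ / (α₁ + α₂ + α₃) := by
  have hβ : 0 < α₁ + α₃ := by positivity
  have hinner : ∀ x₂ ∈ Set.Ioi (0 : ℝ), ∫ x₁ in Set.Ioo (0 : ℝ) x₂,
        (α₁ + α₃) * α₂ * lam ^ (2 : ℕ) * h x₁ * h x₂ *
          (1 - Real.exp (-lam * H x₁)) ^ (α₁ + α₃ - 1) *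
          (1 - Real.exp (-lam * H x₂)) ^ (α₂ - 1) *
          Real.exp (-lam * H x₁ - lam * H x₂) =
      α₂ / (α₁ + α₂ + α₃) * exponentiatedPDF lam H h (α₁ + α₂ + α₃) x₂ := by
    intro x₂ hx₂
    calc _ = ∫ x₁ in Set.Ioo (0 : ℝ) x₂,
          exponentiatedPDF lam H h α₂ x₂ * exponentiatedPDF lam H h (α₁ + α₃) x₁ := by
          refine setIntegral_congr_fun measurableSet_Ioo fun x₁ _ => ?_
          simp only [exponentiatedPDF, sub_eq_add_neg (-lam * H x₁), ← neg_mul, exp_add]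
          ring
      _ = exponentiatedCDF lam H (α₁ + α₃) x₂ * exponentiatedPDF lam H h α₂ x₂ := by
          rw [integral_const_mul, integral_Ioo_exponentiatedPDF hlam hHmono hH0 hHcont0 hHpos hd
            hβ (le_of_lt hx₂), mul_comm]
      _ = _ := by
          rw [exponentiatedCDF_mul_exponentiatedPDF (mul_pos hlam (hHpos x₂ hx₂)) (by positivity),
            add_right_comm]
  rw [setIntegral_congr_fun measurableSet_Ioi hinner, integral_const_mul,
    integral_Ioi_exponentiatedPDF hlam hHmono hH0 hHcont0 hHpos hd hHtop (by positivity), mul_one]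

/-- The double integral of `f₁` over `{0 < x₁ < x₂}` equals
`α₂/(α₁+α₂+α₃)`. -/
theorem beew_f1_mass
    (lam α₁ α₂ α₃ : ℝ) (hlam : 0 < lam)
    (hα₁ : 0 < α₁) (hα₂ : 0 < α₂) (hα₃ : 0 < α₃)
    (H h : ℝ → ℝ) (hH : ∀ x, 0 ≤ H x) (hHmono : Monotone H)
    (hH0 : H 0 = 0) (hHcont0 : ContinuousAt H 0)
    (hHpos : ∀ x : ℝ, 0 < x → 0 < H x)
    (hd : ∀ x : ℝ, 0 < x → HasDerivAt H (h x) x)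
    (hHtop : Tendsto H atTop atTop) :
    ∫ x₂ in Set.Ioi (0 : ℝ), ∫ x₁ in Set.Ioo (0 : ℝ) x₂,
        (α₁ + α₃) * α₂ * lam ^ (2 : ℕ) * h x₁ * h x₂ *
          (1 - Real.exp (-lam * H x₁)) ^ (α₁ + α₃ - 1) *
          (1 - Real.exp (-lam * H x₂)) ^ (α₂ - 1) *
          Real.exp (-lam * H x₁ - lam * H x₂) =
      α₂ / (α₁ + α₂ + α₃) :=
  beew_f1_mass_general lam α₁ α₂ α₃ hlam hα₁ hα₂ hα₃ H h hHmono hH0 hHcont0 hHpos hd hHtop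
end

section
/- The total mass of the BEEW density pieces is one: ∫_{x₂ ∈ (0,∞)} ∫_{x₁ ∈ (0,x₂)} f₁(x₁,x₂) dx₁ dx₂ + ∫_{x₁ ∈ (0,∞)} ∫_{x₂ ∈ (0,x₁)} f₂(x₁,x₂) dx₂ dx₁ + ∫_{x ∈ (0,∞)} f₀(x) dx = 1, where f₁(x₁,x₂) = (α₁+α₃)·α₂·λ²·h(x₁)·h(x₂)·(1−exp(−λH(x₁)))^{α₁+α₃−1}·(1−exp(−λH(x₂)))^{α₂−1}·exp(−λH(x₁)−λH(x₂)), f₂(x₁,x₂) = (α₂+α₃)·α₁·λ²·h(x₁)·h(x₂)·(1−exp(−λH(x₁)))^{α₁−1}·(1−exp(−λH(x₂)))^{α₂+α₃−1}·exp(−λH(x₁)−λH(x₂)), and f₀(x) = α₃·λ·h(x)·exp(−λH(x))·(1−exp(−λH(x)))^{α₁+α₂+α₃−1}. -/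
open MeasureTheory Real Filter Topology Set

/-!
Write `G = 1 - exp (-λ H)`, a distribution function on `(0, ∞)` with density `g = λ h exp (-λ H)`,
so that `G ^ a` has density `a g G ^ (a - 1)`. Each BEEW piece factors into such densities:
the inner integral of the first piece is `G (x₂) ^ (α₁ + α₃)`, which turns its outer integrand into
`α₂ / (α₁ + α₂ + α₃)` times the density of `G ^ (α₁ + α₂ + α₃)`. Likewise the second and third
pieces have mass `α₁ / (α₁ + α₂ + α₃)` and `α₃ / (α₁ + α₂ + α₃)`.
-/

/-- The density of `G ^ a` when `G` has density `g`. -/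
noncomputable def rpowDensity (G g : ℝ → ℝ) (a x : ℝ) : ℝ := a * g x * G x ^ (a - 1)

structure HasDensityOnIoi (G g : ℝ → ℝ) : Prop where
  zero : G 0 = 0
  continuousOn : ContinuousOn G (Ici 0)
  pos : ∀ x, 0 < x → 0 < G x
  hasDerivAt : ∀ x, 0 < x → HasDerivAt G (g x) x
  nonneg : ∀ x, 0 < x → 0 ≤ g x

namespace HasDensityOnIoi

variable {G g : ℝ → ℝ} {a b : ℝ} (hG : HasDensityOnIoi G g)
include hG

lemma hasDerivAt_rpow {x : ℝ} (hx : 0 < x) :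
    HasDerivAt (fun y => G y ^ a) (rpowDensity G g a x) x := by
  have := (Real.hasDerivAt_rpow_const (p := a) (Or.inl (hG.pos x hx).ne')).comp x
    (hG.hasDerivAt x hx)
  exact this.congr_deriv (by simp only [rpowDensity]; ring)

lemma rpowDensity_nonneg (ha : 0 ≤ a) {x : ℝ} (hx : 0 < x) : 0 ≤ rpowDensity G g a x :=
  mul_nonneg (mul_nonneg ha (hG.nonneg x hx)) (rpow_nonneg (hG.pos x hx).le _)

lemma continuousOn_rpow (ha : 0 < a) : ContinuousOn (fun y => G y ^ a) (Ici 0) :=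
  hG.continuousOn.rpow_const fun _ _ => Or.inr ha.le

lemma integral_Ioo_rpowDensity (ha : 0 < a) (hb : 0 ≤ b) :
    ∫ x in Ioo 0 b, rpowDensity G g a x = G b ^ a := by
  have hcont : ContinuousOn (fun y => G y ^ a) (Icc 0 b) :=
    (hG.continuousOn_rpow ha).mono Icc_subset_Ici_self
  have hderiv : ∀ x ∈ Ioo 0 b, HasDerivAt (fun y => G y ^ a) (rpowDensity G g a x) x :=
    fun x hx => hG.hasDerivAt_rpow hx.1
  have hint : IntervalIntegrable (rpowDensity G g a) volume 0 b := by
    refine intervalIntegral.intervalIntegrable_deriv_of_nonneg (uIcc_of_le hb ▸ hcont) ?_ ?_ <;>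
      rw [min_eq_left hb, max_eq_right hb]
    · exact hderiv
    · exact fun x hx => hG.rpowDensity_nonneg ha.le hx.1
  rw [← integral_Ioc_eq_integral_Ioo, ← intervalIntegral.integral_of_le hb,
    intervalIntegral.integral_eq_sub_of_hasDerivAt_of_le hb hcont hderiv hint, hG.zero,
    zero_rpow ha.ne', sub_zero]

lemma integral_Ioi_rpowDensity (hGtop : Tendsto G atTop (𝓝 1)) (ha : 0 < a) :
    ∫ x in Ioi 0, rpowDensity G g a x = 1 := by
  have hlim : Tendsto (fun y => G y ^ a) atTop (𝓝 1) := by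
    simpa using hGtop.rpow_const (p := a) (Or.inl one_ne_zero)
  rw [integral_Ioi_of_hasDerivAt_of_nonneg (hG.continuousOn_rpow ha 0 self_mem_Ici)
    (fun x hx => hG.hasDerivAt_rpow hx) (fun x hx => hG.rpowDensity_nonneg ha.le hx) hlim,
    hG.zero, zero_rpow ha.ne', sub_zero]

lemma integral_Ioi_rpowDensity_mul_integral_Ioo (hGtop : Tendsto G atTop (𝓝 1))
    (ha : 0 < a) (hb : 0 < b) :
    ∫ y in Ioi 0, ∫ x in Ioo 0 y, rpowDensity G g b y * rpowDensity G g a x = b / (a + b) := by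
  calc ∫ y in Ioi 0, ∫ x in Ioo 0 y, rpowDensity G g b y * rpowDensity G g a x
      = ∫ y in Ioi 0, b / (a + b) * rpowDensity G g (a + b) y := by
        refine setIntegral_congr_fun measurableSet_Ioi fun y (hy : 0 < y) => ?_
        have hpow : G y ^ (b - 1) * G y ^ a = G y ^ (a + b - 1) := by
          rw [← rpow_add (hG.pos y hy)]; ring_nf
        rw [integral_const_mul, hG.integral_Ioo_rpowDensity ha hy.le]
        simp only [rpowDensity]
        field_simp
        rw [← hpow]
        ring
    _ = b / (a + b) := by
        rw [integral_const_mul, hG.integral_Ioi_rpowDensity hGtop (by positivity), mul_one]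

end HasDensityOnIoi

section ExponentialBaseline

variable {lam : ℝ} {H h : ℝ → ℝ}

lemma hasDensityOnIoi_one_sub_exp_neg_mul (hlam : 0 < lam) (hHmono : Monotone H)
    (hH0 : H 0 = 0) (hHcont0 : ContinuousAt H 0) (hHpos : ∀ x, 0 < x → 0 < H x)
    (hd : ∀ x, 0 < x → HasDerivAt H (h x) x) :
    HasDensityOnIoi (fun x => 1 - exp (-lam * H x)) (fun x => lam * h x * exp (-lam * H x)) where
  zero := by simp [hH0]
  continuousOn y hy := by
    have hHy : ContinuousAt H y := by
      rcases (mem_Ici.1 hy).eq_or_lt with rfl | hy'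
      · exact hHcont0
      · exact (hd y hy').continuousAt
    exact (continuousAt_const.sub
      (continuous_exp.continuousAt.comp (continuousAt_const.mul hHy))).continuousWithinAt
  pos x hx := by
    have : -lam * H x < 0 := by nlinarith [mul_pos hlam (hHpos x hx)]
    linarith [exp_lt_one_iff.2 this]
  hasDerivAt x hx := (((hd x hx).const_mul (-lam)).exp.const_sub 1).congr_deriv (by ring)
  nonneg x hx := by
    have := (hd x hx).nonneg_of_monotone hHmono
    positivity

lemma tendsto_one_sub_exp_neg_mul (hlam : 0 < lam) (hHtop : Tendsto H atTop atTop) :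
    Tendsto (fun y => 1 - exp (-lam * H y)) atTop (𝓝 1) := by
  have := tendsto_exp_atBot.comp (hHtop.const_mul_atTop_of_neg (neg_neg_of_pos hlam))
  simpa using tendsto_const_nhds (x := (1 : ℝ)).sub this

end ExponentialBaseline

theorem beew_total_mass_general
    (lam α₁ α₂ α₃ : ℝ) (hlam : 0 < lam)
    (hα₁ : 0 < α₁) (hα₂ : 0 < α₂) (hα₃ : 0 < α₃)
    (H h : ℝ → ℝ) (hHmono : Monotone H)
    (hH0 : H 0 = 0) (hHcont0 : ContinuousAt H 0)
    (hHpos : ∀ x : ℝ, 0 < x → 0 < H x)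
    (hd : ∀ x : ℝ, 0 < x → HasDerivAt H (h x) x)
    (hHtop : Tendsto H atTop atTop) :
    (∫ x₂ in Set.Ioi (0 : ℝ), ∫ x₁ in Set.Ioo (0 : ℝ) x₂,
        (α₁ + α₃) * α₂ * lam ^ (2 : ℕ) * h x₁ * h x₂ *
          (1 - Real.exp (-lam * H x₁)) ^ (α₁ + α₃ - 1) *
          (1 - Real.exp (-lam * H x₂)) ^ (α₂ - 1) *
          Real.exp (-lam * H x₁ - lam * H x₂)) +
    (∫ x₁ in Set.Ioi (0 : ℝ), ∫ x₂ in Set.Ioo (0 : ℝ) x₁,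
        (α₂ + α₃) * α₁ * lam ^ (2 : ℕ) * h x₁ * h x₂ *
          (1 - Real.exp (-lam * H x₁)) ^ (α₁ - 1) *
          (1 - Real.exp (-lam * H x₂)) ^ (α₂ + α₃ - 1) *
          Real.exp (-lam * H x₁ - lam * H x₂)) +
    (∫ x in Set.Ioi (0 : ℝ),
        α₃ * lam * h x * Real.exp (-lam * H x) *
          (1 - Real.exp (-lam * H x)) ^ (α₁ + α₂ + α₃ - 1)) = 1 := by
  set G : ℝ → ℝ := fun x => 1 - exp (-lam * H x)
  set g : ℝ → ℝ := fun x => lam * h x * exp (-lam * H x)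
  have hG : HasDensityOnIoi G g :=
    hasDensityOnIoi_one_sub_exp_neg_mul hlam hHmono hH0 hHcont0 hHpos hd
  have hGtop : Tendsto G atTop (𝓝 1) := tendsto_one_sub_exp_neg_mul hlam hHtop
  have piece₁ := hG.integral_Ioi_rpowDensity_mul_integral_Ioo hGtop
    (a := α₁ + α₃) (b := α₂) (by positivity) hα₂
  have piece₂ := hG.integral_Ioi_rpowDensity_mul_integral_Ioo hGtop
    (a := α₂ + α₃) (b := α₁) (by positivity) hα₁
  have piece₀ := hG.integral_Ioi_rpowDensity hGtop (a := α₁ + α₂ + α₃) (by positivity)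
  have hsplit (u v : ℝ) : exp (-lam * u - lam * v) = exp (-lam * u) * exp (-lam * v) := by
    rw [← exp_add]; ring_nf
  calc _ = (∫ y in Ioi 0, ∫ x in Ioo 0 y, rpowDensity G g α₂ y * rpowDensity G g (α₁ + α₃) x)
        + (∫ y in Ioi 0, ∫ x in Ioo 0 y, rpowDensity G g α₁ y * rpowDensity G g (α₂ + α₃) x)
        + α₃ / (α₁ + α₂ + α₃) * ∫ x in Ioi 0, rpowDensity G g (α₁ + α₂ + α₃) x := by
        rw [← integral_const_mul]
        congr 2
        iterate 2
          · congr 1; ext y; congr 1; ext x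
            simp only [rpowDensity, G, g, hsplit]; ring
        · ext x
          simp only [rpowDensity, G, g]; field_simp
    _ = 1 := by
        rw [piece₁, piece₂, piece₀]
        field_simp
        ring

/-- The total mass of the three BEEW density pieces is one. -/
theorem beew_total_mass
    (lam α₁ α₂ α₃ : ℝ) (hlam : 0 < lam)
    (hα₁ : 0 < α₁) (hα₂ : 0 < α₂) (hα₃ : 0 < α₃)
    (H h : ℝ → ℝ) (hH : ∀ x, 0 ≤ H x) (hHmono : Monotone H)
    (hH0 : H 0 = 0) (hHcont0 : ContinuousAt H 0)
    (hHpos : ∀ x : ℝ, 0 < x → 0 < H x)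
    (hd : ∀ x : ℝ, 0 < x → HasDerivAt H (h x) x)
    (hHtop : Tendsto H atTop atTop) :
    (∫ x₂ in Set.Ioi (0 : ℝ), ∫ x₁ in Set.Ioo (0 : ℝ) x₂,
        (α₁ + α₃) * α₂ * lam ^ (2 : ℕ) * h x₁ * h x₂ *
          (1 - Real.exp (-lam * H x₁)) ^ (α₁ + α₃ - 1) *
          (1 - Real.exp (-lam * H x₂)) ^ (α₂ - 1) *
          Real.exp (-lam * H x₁ - lam * H x₂)) +
    (∫ x₁ in Set.Ioi (0 : ℝ), ∫ x₂ in Set.Ioo (0 : ℝ) x₁,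
        (α₂ + α₃) * α₁ * lam ^ (2 : ℕ) * h x₁ * h x₂ *
          (1 - Real.exp (-lam * H x₁)) ^ (α₁ - 1) *
          (1 - Real.exp (-lam * H x₂)) ^ (α₂ + α₃ - 1) *
          Real.exp (-lam * H x₁ - lam * H x₂)) +
    (∫ x in Set.Ioi (0 : ℝ),
        α₃ * lam * h x * Real.exp (-lam * H x) *
          (1 - Real.exp (-lam * H x)) ^ (α₁ + α₂ + α₃ - 1)) = 1 :=
  beew_total_mass_general lam α₁ α₂ α₃ hlam hα₁ hα₂ hα₃ H h hHmono hH0 hHcont0 hHpos hd hHtop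
end

section
/- Assume H is monotone increasing. For i = 1, 2 set θᵢ = α₃/(αᵢ+α₃) and uᵢ = G(xᵢ)^{αᵢ+α₃}. Then for all x₁, x₂ ∈ ℝ, the Marshall–Olkin copula evaluated at the marginals recovers the BEEW joint cdf: u₁^{1−θ₁} · u₂^{1−θ₂} · min(u₁^{θ₁}, u₂^{θ₂}) = G(x₁)^{α₁} · G(x₂)^{α₂} · G(min(x₁,x₂))^{α₃}. -/
open Real

theorem rpow_add_rpow_one_sub_div {x a b : ℝ} (hx : 0 ≤ x) (hab : a + b ≠ 0) :
    (x ^ (a + b)) ^ (1 - b / (a + b)) = x ^ a := by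
  rw [← rpow_mul hx]
  congr 1
  field_simp
  ring

theorem rpow_add_rpow_div {x a b : ℝ} (hx : 0 ≤ x) (hab : a + b ≠ 0) :
    (x ^ (a + b)) ^ (b / (a + b)) = x ^ b := by
  rw [← rpow_mul hx]
  congr 1
  field_simp

theorem one_sub_exp_neg_mul_nonneg_s12 {lam t : ℝ} (hlam : 0 ≤ lam) (ht : 0 ≤ t) :
    0 ≤ 1 - exp (-lam * t) := by
  have : exp (-lam * t) ≤ 1 := exp_le_one_iff.mpr (by nlinarith)
  linarith

theorem Monotone.one_sub_exp_neg_mul {H : ℝ → ℝ} (hH : Monotone H) {lam : ℝ} (hlam : 0 ≤ lam) :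
    Monotone fun x => 1 - exp (-lam * H x) := fun a b hab => by
  have : exp (-lam * H b) ≤ exp (-lam * H a) := exp_le_exp.mpr (by nlinarith [hH hab])
  dsimp only
  linarith

theorem Monotone.min_rpow {f : ℝ → ℝ} (hf : Monotone f) (hf₀ : ∀ x, 0 ≤ f x) {r : ℝ}
    (hr : 0 ≤ r) (a b : ℝ) : min (f a ^ r) (f b ^ r) = f (min a b) ^ r :=
  (Monotone.map_min fun _ _ hab => rpow_le_rpow (hf₀ _) (hf hab) hr).symm

/-- The Marshall–Olkin copula with parameters `θᵢ = α₃/(αᵢ+α₃)`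
evaluated at the EEW marginals `uᵢ = G(xᵢ)^(αᵢ+α₃)` recovers the BEEW joint
cdf. -/
theorem beew_marshall_olkin_copula
    (lam α₁ α₂ α₃ : ℝ) (hlam : 0 < lam)
    (hα₁ : 0 < α₁) (hα₂ : 0 < α₂) (hα₃ : 0 < α₃)
    (H : ℝ → ℝ) (hH : ∀ x, 0 ≤ H x) (hHmono : Monotone H)
    (G : ℝ → ℝ) (hG : ∀ x, G x = 1 - Real.exp (-lam * H x))
    (x₁ x₂ : ℝ) :
    (G x₁ ^ (α₁ + α₃)) ^ (1 - α₃ / (α₁ + α₃)) *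
        (G x₂ ^ (α₂ + α₃)) ^ (1 - α₃ / (α₂ + α₃)) *
        min ((G x₁ ^ (α₁ + α₃)) ^ (α₃ / (α₁ + α₃)))
          ((G x₂ ^ (α₂ + α₃)) ^ (α₃ / (α₂ + α₃))) =
      G x₁ ^ α₁ * G x₂ ^ α₂ * G (min x₁ x₂) ^ α₃ := by
  obtain rfl : G = fun x => 1 - exp (-lam * H x) := funext hG
  have hG₀ (x : ℝ) : 0 ≤ 1 - exp (-lam * H x) := one_sub_exp_neg_mul_nonneg_s12 hlam.le (hH x)
  have h₁ : α₁ + α₃ ≠ 0 := by positivity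
  have h₂ : α₂ + α₃ ≠ 0 := by positivity
  simp only [rpow_add_rpow_one_sub_div (hG₀ _) h₁, rpow_add_rpow_one_sub_div (hG₀ _) h₂,
    rpow_add_rpow_div (hG₀ _) h₁, rpow_add_rpow_div (hG₀ _) h₂,
    (hHmono.one_sub_exp_neg_mul hlam.le).min_rpow hG₀ hα₃.le]
end

section
/- Assume moreover that H is continuous. Then ℙ(X₁ = X₂) = α₃/(α₁+α₂+α₃); that is, the singular part of the BEEW distribution along the diagonal has weight α₃/(α₁+α₂+α₃). -/
/-!
`max U₁ U₃ = max U₂ U₃` holds exactly when `max U₁ U₂ ≤ U₃` or `U₁ = U₂`, and the tie `U₁ = U₂` is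
null because `U₁` has a continuous distribution. Writing `G = 1 - exp (-λ H)`, the cdf of
`W = max U₁ U₂` is `G ^ (α₁ + α₂) = F₃ ^ r` with `F₃ = G ^ α₃` the cdf of `U₃` and
`r = (α₁ + α₂) / α₃`. By independence `ℙ(W ≤ U₃) = 𝔼[F₃(U₃) ^ r]`, and since `F₃` is continuous,
`F₃(U₃)` is uniform on `[0, 1]` (probability integral transform), so this is
`∫₀¹ u ^ r du = 1 / (r + 1) = α₃ / (α₁ + α₂ + α₃)`.
-/

open MeasureTheory ProbabilityTheory Set Filter Topology
open scoped ENNReal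

lemma max_eq_max_iff {α : Type*} [LinearOrder α] {a b c : α} :
    max a c = max b c ↔ max a b ≤ c ∨ a = b := by
  grind

lemma measure_max_eq_max_of_measure_eq_zero {Ω α : Type*} [MeasurableSpace Ω] [LinearOrder α]
    {P : Measure Ω} {X Y Z : Ω → α} (htie : P {ω | X ω = Y ω} = 0) :
    P {ω | max (X ω) (Z ω) = max (Y ω) (Z ω)} = P {ω | max (X ω) (Y ω) ≤ Z ω} := by
  have hunion : {ω | max (X ω) (Z ω) = max (Y ω) (Z ω)} =
      {ω | max (X ω) (Y ω) ≤ Z ω} ∪ {ω | X ω = Y ω} := by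
    ext ω
    exact max_eq_max_iff
  rw [hunion, measure_congr (union_ae_eq_left_of_ae_eq_empty (ae_eq_empty.2 htie))]

namespace ProbabilityTheory

variable {μ : Measure ℝ} [IsProbabilityMeasure μ]

lemma nullSingletonClass_of_continuous_cdf (hF : Continuous (cdf μ)) : NullSingletonClass μ where
  measure_singleton x := by
    rw [← measure_cdf μ, StieltjesFunction.measure_singleton,
      hF.continuousWithinAt.leftLim_eq, sub_self, ENNReal.ofReal_zero]

lemma measure_cdf_le (hF : Continuous (cdf μ)) {u : ℝ} (hu₀ : 0 ≤ u) (hu₁ : u < 1) :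
    μ {x | cdf μ x ≤ u} = ENNReal.ofReal u := by
  set S := {x | cdf μ x ≤ u}
  rcases S.eq_empty_or_nonempty with hS | hS
  · have hu : u ≤ 0 := ge_of_tendsto' (tendsto_cdf_atBot μ) fun x =>
      (not_le.1 fun hx => hS.subset hx).le
    rw [hS, measure_empty, le_antisymm hu hu₀, ENNReal.ofReal_zero]
  have hbdd : BddAbove S := by
    obtain ⟨N, hN⟩ := eventually_atTop.1 ((tendsto_cdf_atTop μ).eventually (lt_mem_nhds hu₁))
    exact ⟨N, fun x hx => not_lt.1 fun hNx => (hN x hNx.le).not_ge hx⟩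
  have hclosed : IsClosed S := isClosed_le hF continuous_const
  have hsup : sSup S ∈ S := hclosed.csSup_mem hS hbdd
  have hS_eq : S = Iic (sSup S) := Subset.antisymm (fun x hx => le_csSup hbdd hx)
    fun x hx => (monotone_cdf μ hx).trans hsup
  have hcdf_sup : cdf μ (sSup S) = u := by
    have hlim := (hF.tendsto (sSup S)).mono_left (nhdsWithin_le_nhds (s := Ioi (sSup S)))
    refine le_antisymm hsup (ge_of_tendsto hlim ?_)
    filter_upwards [self_mem_nhdsWithin] with x hx
    exact (not_le.1 fun h : x ∈ S => notMem_of_csSup_lt hx hbdd h).le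
  rw [hS_eq, ← ofReal_cdf, hcdf_sup]

lemma map_cdf_eq_restrict_Ioc (hF : Continuous (cdf μ)) :
    μ.map (cdf μ) = volume.restrict (Ioc 0 1) := by
  refine Measure.ext_of_Iic _ _ fun u => ?_
  rw [Measure.map_apply (monotone_cdf μ).measurable measurableSet_Iic,
    Measure.restrict_apply measurableSet_Iic, inter_comm, Ioc_inter_Iic, Real.volume_Ioc, sub_zero]
  change μ {x | cdf μ x ≤ u} = _
  rcases lt_or_ge u 0 with hu | hu₀
  · rw [ENNReal.ofReal_of_nonpos (by simp [hu.le]), measure_eq_zero_iff_ae_notMem]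
    exact Eventually.of_forall fun x hx => (hx.trans_lt hu).not_ge (cdf_nonneg μ x)
  rcases lt_or_ge u 1 with hu₁ | hu₁
  · rw [min_eq_right hu₁.le, measure_cdf_le hF hu₀ hu₁]
  · rw [min_eq_left hu₁, ENNReal.ofReal_one, ← measure_univ (μ := μ)]
    congr
    exact eq_univ_of_forall fun x => (cdf_le_one μ x).trans hu₁

lemma lintegral_cdf_rpow (hF : Continuous (cdf μ)) {r : ℝ} (hr : -1 < r) :
    ∫⁻ x, ENNReal.ofReal (cdf μ x ^ r) ∂μ = ENNReal.ofReal (1 / (r + 1)) := by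
  have hint : IntegrableOn (fun u : ℝ => u ^ r) (Ioc 0 1) :=
    (intervalIntegrable_iff_integrableOn_Ioc_of_le zero_le_one).1
      (intervalIntegral.intervalIntegrable_rpow' hr)
  have hnonneg : 0 ≤ᵐ[volume.restrict (Ioc 0 1)] fun u : ℝ => u ^ r :=
    (ae_restrict_iff' measurableSet_Ioc).2
      (Eventually.of_forall fun u hu => Real.rpow_nonneg hu.1.le r)
  rw [← lintegral_map (f := fun u => ENNReal.ofReal (u ^ r)) (by fun_prop)
      (monotone_cdf μ).measurable, map_cdf_eq_restrict_Ioc hF,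
    ← ofReal_integral_eq_lintegral_ofReal hint hnonneg,
    ← intervalIntegral.integral_of_le zero_le_one, integral_rpow (Or.inl hr), Real.one_rpow,
    Real.zero_rpow (by linarith), sub_zero]

section Independence

variable {Ω : Type*} [MeasurableSpace Ω] {P : Measure Ω} [IsProbabilityMeasure P]

lemma IndepFun.measure_preimage_eq_lintegral {α β : Type*} [MeasurableSpace α] [MeasurableSpace β]
    {X : Ω → α} {Y : Ω → β} (hXY : IndepFun X Y P) (hX : Measurable X) (hY : Measurable Y)
    {s : Set (α × β)} (hs : MeasurableSet s) :
    P ((fun ω => (X ω, Y ω)) ⁻¹' s) = ∫⁻ y, P.map X ((fun x => (x, y)) ⁻¹' s) ∂P.map Y := by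
  rw [← Measure.map_apply (hX.prodMk hY) hs,
    hXY.map_prod_eq_prod_map_map hX.aemeasurable hY.aemeasurable, Measure.prod_apply_symm hs]

variable {X Y : Ω → ℝ}

lemma cdf_map_eq_of_measure_le (hX : Measurable X) {F : ℝ → ℝ} (hF : ∀ x, 0 ≤ F x)
    (h : ∀ x, P {ω | X ω ≤ x} = ENNReal.ofReal (F x)) : cdf (P.map X) = F := by
  have := Measure.isProbabilityMeasure_map (μ := P) hX.aemeasurable
  funext x
  rw [cdf_eq_real, map_measureReal_apply hX measurableSet_Iic, measureReal_def]
  change (P {ω | X ω ≤ x}).toReal = _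
  rw [h, ENNReal.toReal_ofReal (hF x)]

lemma IndepFun.measure_eq_eq_zero (hXY : IndepFun X Y P) (hX : Measurable X) (hY : Measurable Y)
    [NullSingletonClass (P.map X)] : P {ω | X ω = Y ω} = 0 := by
  have hdiag : MeasurableSet {p : ℝ × ℝ | p.1 = p.2} :=
    measurableSet_eq_fun measurable_fst measurable_snd
  have hsection (y : ℝ) : (fun x => (x, y)) ⁻¹' {p : ℝ × ℝ | p.1 = p.2} = {y} := rfl
  simpa [hsection] using hXY.measure_preimage_eq_lintegral hX hY hdiag

lemma IndepFun.measure_le_eq_lintegral_cdf (hXY : IndepFun X Y P) (hX : Measurable X)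
    (hY : Measurable Y) :
    P {ω | X ω ≤ Y ω} = ∫⁻ y, ENNReal.ofReal (cdf (P.map X) y) ∂P.map Y := by
  have := Measure.isProbabilityMeasure_map (μ := P) hX.aemeasurable
  simp_rw [ofReal_cdf]
  exact hXY.measure_preimage_eq_lintegral hX hY (measurableSet_le measurable_fst measurable_snd)

lemma IndepFun.cdf_map_max (hXY : IndepFun X Y P) (hX : Measurable X) (hY : Measurable Y)
    (x : ℝ) : cdf (P.map fun ω => max (X ω) (Y ω)) x = cdf (P.map X) x * cdf (P.map Y) x := by
  have := Measure.isProbabilityMeasure_map (μ := P) hX.aemeasurable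
  have := Measure.isProbabilityMeasure_map (μ := P) hY.aemeasurable
  have := Measure.isProbabilityMeasure_map (μ := P) (hX.max hY).aemeasurable
  have hmax : (fun ω => max (X ω) (Y ω)) ⁻¹' Iic x = X ⁻¹' Iic x ∩ Y ⁻¹' Iic x := by
    ext; simp
  simp only [cdf_eq_real, map_measureReal_apply (hX.max hY) measurableSet_Iic,
    map_measureReal_apply hX measurableSet_Iic, map_measureReal_apply hY measurableSet_Iic, hmax]
  rw [measureReal_def, hXY.measure_inter_preimage_eq_mul _ _ measurableSet_Iic measurableSet_Iic,
    ENNReal.toReal_mul, measureReal_def, measureReal_def]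

lemma IndepFun.measure_le_of_cdf_eq_rpow (hXY : IndepFun X Y P) (hX : Measurable X)
    (hY : Measurable Y) (hFY : Continuous (cdf (P.map Y))) {r : ℝ} (hr : -1 < r)
    (hFX : ∀ x, cdf (P.map X) x = cdf (P.map Y) x ^ r) :
    P {ω | X ω ≤ Y ω} = ENNReal.ofReal (1 / (r + 1)) := by
  have := Measure.isProbabilityMeasure_map (μ := P) hY.aemeasurable
  simp_rw [hXY.measure_le_eq_lintegral_cdf hX hY, hFX]
  exact lintegral_cdf_rpow hFY hr

end Independence

end ProbabilityTheory

/-- With `H` continuous, the singular part along the diagonal has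
weight `ℙ(X₁ = X₂) = α₃/(α₁+α₂+α₃)`. -/
theorem beew_diagonal_mass
    {Ω : Type*} [MeasurableSpace Ω] (P : Measure Ω) [IsProbabilityMeasure P]
    (lam : ℝ) (hlam : 0 < lam)
    (α : Fin 3 → ℝ) (hα : ∀ i, 0 < α i)
    (H : ℝ → ℝ) (hH : ∀ x, 0 ≤ H x) (hHcont : Continuous H)
    (U : Fin 3 → Ω → ℝ) (hUmeas : ∀ i, Measurable (U i))
    (hindep : iIndepFun U P)
    (hcdf : ∀ i x, P {ω | U i ω ≤ x} =
      ENNReal.ofReal ((1 - Real.exp (-lam * H x)) ^ (α i))) :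
    P {ω | max (U 0 ω) (U 2 ω) = max (U 1 ω) (U 2 ω)} =
      ENNReal.ofReal (α 2 / (α 0 + α 1 + α 2)) := by
  set G : ℝ → ℝ := fun x => 1 - Real.exp (-lam * H x)
  have hG_nonneg (x : ℝ) : 0 ≤ G x := sub_nonneg.2 (Real.exp_le_one_iff.2 (by nlinarith [hH x]))
  have hcdfU (i : Fin 3) : cdf (P.map (U i)) = fun x => G x ^ α i :=
    cdf_map_eq_of_measure_le (hUmeas i) (fun x => Real.rpow_nonneg (hG_nonneg x) _) (hcdf i)
  have hcdfU_cont (i : Fin 3) : Continuous (cdf (P.map (U i))) :=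
    hcdfU i ▸ (by fun_prop : Continuous G).rpow_const fun _ => Or.inr (hα i).le
  have h01 : IndepFun (U 0) (U 1) P := hindep.indepFun (by decide)
  have := Measure.isProbabilityMeasure_map (μ := P) (hUmeas 0).aemeasurable
  have := nullSingletonClass_of_continuous_cdf (hcdfU_cont 0)
  have hW2 : IndepFun (fun ω => max (U 0 ω) (U 1 ω)) (U 2) P :=
    (hindep.indepFun_prodMk hUmeas 0 1 2 (by decide) (by decide)).comp
      (measurable_fst.max measurable_snd) measurable_id
  have hα2 := (hα 2).ne'
  have hr : -1 < (α 0 + α 1) / α 2 :=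
    neg_one_lt_zero.trans (div_pos (add_pos (hα 0) (hα 1)) (hα 2))
  have hcdfW (x : ℝ) : cdf (P.map fun ω => max (U 0 ω) (U 1 ω)) x =
      cdf (P.map (U 2)) x ^ ((α 0 + α 1) / α 2) := by
    rw [h01.cdf_map_max (hUmeas 0) (hUmeas 1), hcdfU, hcdfU, hcdfU,
      ← Real.rpow_add' (hG_nonneg x) (add_pos (hα 0) (hα 1)).ne', ← Real.rpow_mul (hG_nonneg x),
      mul_div_cancel₀ _ hα2]
  rw [measure_max_eq_max_of_measure_eq_zero (h01.measure_eq_eq_zero (hUmeas 0) (hUmeas 1)),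
    hW2.measure_le_of_cdf_eq_rpow ((hUmeas 0).max (hUmeas 1)) (hUmeas 2) (hcdfU_cont 2) hr hcdfW]
  congr 1
  have := (add_pos (add_pos (hα 0) (hα 1)) (hα 2)).ne'
  field_simp
end

section
/- For all 0 < x₁ ≤ x₂, ℙ(X₁ ≤ x₁ and X₂ ≤ x₂) = (1 − exp(−λ·x₁^β))^{α₁+α₃}·(1 − exp(−λ·x₂^β))^{α₂}, and for all 0 < x₂ ≤ x₁, ℙ(X₁ ≤ x₁ and X₂ ≤ x₂) = (1 − exp(−λ·x₁^β))^{α₁}·(1 − exp(−λ·x₂^β))^{α₂+α₃} (the bivariate exponentiated Weibull joint cdf). -/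
open MeasureTheory ProbabilityTheory Real

/-! The event `{X₁ ≤ x₁, X₂ ≤ x₂}` is `{U₁ ≤ x₁, U₂ ≤ x₂, U₃ ≤ min x₁ x₂}`, so by independence
its probability is `F₁(x₁) F₂(x₂) F₃(min x₁ x₂)`. Since every `Fᵢ` is a power of the same base
`1 - exp (-λ x^β)`, the factor `F₃` merges with `F₁` or `F₂` according to which of `x₁, x₂` is
smaller. -/

namespace ProbabilityTheory

lemma iIndepFun.measure_forall_le {Ω ι : Type*} [MeasurableSpace Ω] [Fintype ι]
    {P : Measure Ω} {U : ι → Ω → ℝ} (hU : iIndepFun U P) (t : ι → ℝ) :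
    P {ω | ∀ i, U i ω ≤ t i} = ∏ i, P {ω | U i ω ≤ t i} := by
  have hset : {ω | ∀ i, U i ω ≤ t i} = ⋂ i, U i ⁻¹' Set.Iic (t i) := by
    ext ω
    simp
  rw [hset, hU.meas_iInter fun i => ⟨Set.Iic (t i), measurableSet_Iic, rfl⟩]
  rfl

lemma iIndepFun.measure_max_le_and_max_le_s16 {Ω : Type*} [MeasurableSpace Ω] {P : Measure Ω}
    {U : Fin 3 → Ω → ℝ} (hU : iIndepFun U P) (x₁ x₂ : ℝ) :
    P {ω | max (U 0 ω) (U 2 ω) ≤ x₁ ∧ max (U 1 ω) (U 2 ω) ≤ x₂} =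
      P {ω | U 0 ω ≤ x₁} * P {ω | U 1 ω ≤ x₂} * P {ω | U 2 ω ≤ min x₁ x₂} := by
  have hset : {ω | max (U 0 ω) (U 2 ω) ≤ x₁ ∧ max (U 1 ω) (U 2 ω) ≤ x₂} =
      {ω | ∀ i, U i ω ≤ ![x₁, x₂, min x₁ x₂] i} := by
    ext ω
    simp [Fin.forall_fin_succ]
    tauto
  rw [hset, hU.measure_forall_le, Fin.prod_univ_three]
  rfl

end ProbabilityTheory

lemma one_sub_exp_neg_mul_rpow_pos {lam x : ℝ} (hlam : 0 < lam) (hx : 0 < x) (β : ℝ) :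
    0 < 1 - exp (-lam * x ^ β) :=
  sub_pos.mpr <| exp_lt_one_iff.mpr <|
    mul_neg_of_neg_of_pos (neg_neg_of_pos hlam) (rpow_pos_of_pos hx β)

lemma ENNReal.ofReal_rpow_add {g : ℝ} (hg : 0 < g) (a c : ℝ) :
    ENNReal.ofReal (g ^ (a + c)) = ENNReal.ofReal (g ^ a) * ENNReal.ofReal (g ^ c) := by
  rw [Real.rpow_add hg, ENNReal.ofReal_mul (rpow_nonneg hg.le a)]

theorem bew_joint_cdf_general
    {Ω : Type*} [MeasurableSpace Ω] (P : Measure Ω)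
    (lam β : ℝ) (hlam : 0 < lam)
    (α : Fin 3 → ℝ)
    (U : Fin 3 → Ω → ℝ)
    (hindep : iIndepFun U P)
    (hcdf_pos : ∀ i (x : ℝ), 0 ≤ x → P {ω | U i ω ≤ x} =
      ENNReal.ofReal ((1 - Real.exp (-lam * x ^ β)) ^ (α i))) :
    (∀ x₁ x₂ : ℝ, 0 < x₁ → x₁ ≤ x₂ →
      P {ω | max (U 0 ω) (U 2 ω) ≤ x₁ ∧ max (U 1 ω) (U 2 ω) ≤ x₂} =
        ENNReal.ofReal ((1 - Real.exp (-lam * x₁ ^ β)) ^ (α 0 + α 2) *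
          (1 - Real.exp (-lam * x₂ ^ β)) ^ α 1)) ∧
    (∀ x₁ x₂ : ℝ, 0 < x₂ → x₂ ≤ x₁ →
      P {ω | max (U 0 ω) (U 2 ω) ≤ x₁ ∧ max (U 1 ω) (U 2 ω) ≤ x₂} =
        ENNReal.ofReal ((1 - Real.exp (-lam * x₁ ^ β)) ^ α 0 *
          (1 - Real.exp (-lam * x₂ ^ β)) ^ (α 1 + α 2))) := by
  have hbase {x : ℝ} (hx : 0 < x) := one_sub_exp_neg_mul_rpow_pos hlam hx β
  refine ⟨fun x₁ x₂ hx₁ hle => ?_, fun x₁ x₂ hx₂ hle => ?_⟩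
  · rw [hindep.measure_max_le_and_max_le_s16, min_eq_left hle, hcdf_pos 0 _ hx₁.le,
      hcdf_pos 1 _ (hx₁.le.trans hle), hcdf_pos 2 _ hx₁.le,
      ENNReal.ofReal_mul (rpow_nonneg (hbase hx₁).le _), ENNReal.ofReal_rpow_add (hbase hx₁)]
    ring
  · rw [hindep.measure_max_le_and_max_le_s16, min_eq_right hle, hcdf_pos 0 _ (hx₂.le.trans hle),
      hcdf_pos 1 _ hx₂.le, hcdf_pos 2 _ hx₂.le,
      ENNReal.ofReal_mul (rpow_nonneg (hbase (hx₂.trans_le hle)).le _),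
      ENNReal.ofReal_rpow_add (hbase hx₂)]
    ring

/-- The bivariate exponentiated Weibull joint cdf. -/
theorem bew_joint_cdf
    {Ω : Type*} [MeasurableSpace Ω] (P : Measure Ω) [IsProbabilityMeasure P]
    (lam β : ℝ) (hlam : 0 < lam) (hβ : 0 < β)
    (α : Fin 3 → ℝ) (hα : ∀ i, 0 < α i)
    (U : Fin 3 → Ω → ℝ) (hUmeas : ∀ i, Measurable (U i))
    (hindep : iIndepFun U P)
    (hcdf_pos : ∀ i (x : ℝ), 0 ≤ x → P {ω | U i ω ≤ x} =
      ENNReal.ofReal ((1 - Real.exp (-lam * x ^ β)) ^ (α i)))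
    (hcdf_neg : ∀ i (x : ℝ), x < 0 → P {ω | U i ω ≤ x} = 0) :
    (∀ x₁ x₂ : ℝ, 0 < x₁ → x₁ ≤ x₂ →
      P {ω | max (U 0 ω) (U 2 ω) ≤ x₁ ∧ max (U 1 ω) (U 2 ω) ≤ x₂} =
        ENNReal.ofReal ((1 - Real.exp (-lam * x₁ ^ β)) ^ (α 0 + α 2) *
          (1 - Real.exp (-lam * x₂ ^ β)) ^ α 1)) ∧
    (∀ x₁ x₂ : ℝ, 0 < x₂ → x₂ ≤ x₁ →
      P {ω | max (U 0 ω) (U 2 ω) ≤ x₁ ∧ max (U 1 ω) (U 2 ω) ≤ x₂} =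
        ENNReal.ofReal ((1 - Real.exp (-lam * x₁ ^ β)) ^ α 0 *
          (1 - Real.exp (-lam * x₂ ^ β)) ^ (α 1 + α 2))) :=
  bew_joint_cdf_general P lam β hlam α U hindep hcdf_pos
end

section
/- For all 0 < x₁ ≤ x₂, ℙ(X₁ ≤ x₁ and X₂ ≤ x₂) = (1 − exp(−β·x₁ − (γ/2)·x₁²))^{α₁+α₃}·(1 − exp(−β·x₂ − (γ/2)·x₂²))^{α₂}, and for all 0 < x₂ ≤ x₁, ℙ(X₁ ≤ x₁ and X₂ ≤ x₂) = (1 − exp(−β·x₁ − (γ/2)·x₁²))^{α₁}·(1 − exp(−β·x₂ − (γ/2)·x₂²))^{α₂+α₃} (the bivariate generalized linear failure rate joint cdf). -/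
/-!
Since `X₁ ≤ x₁ ∧ X₂ ≤ x₂` is the event `U₁ ≤ x₁ ∧ U₂ ≤ x₂ ∧ U₃ ≤ min x₁ x₂`, independence factors
its probability as `F(x₁)^α₁ F(x₂)^α₂ F(min x₁ x₂)^α₃`, where `F x = 1 - exp(-βx - γx²/2)`;
the shared factor `F(min x₁ x₂)^α₃` then merges with the factor at the smaller argument.
-/

open MeasureTheory ProbabilityTheory Real

lemma one_sub_exp_linear_quadratic_pos {β γ x : ℝ} (hβ : 0 < β) (hγ : 0 < γ) (hx : 0 < x) :
    0 < 1 - exp (-β * x - (γ / 2) * x ^ (2 : ℕ)) := by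
  have hneg : -β * x - (γ / 2) * x ^ (2 : ℕ) < 0 := by nlinarith [sq_nonneg x]
  linarith [exp_lt_one_iff.mpr hneg]

namespace ProbabilityTheory.iIndepFun

variable {Ω : Type*} [MeasurableSpace Ω] {P : Measure Ω} {U : Fin 3 → Ω → ℝ}

theorem measure_max_le_and_max_le_s18 (hindep : iIndepFun U P) (x₁ x₂ : ℝ) :
    P {ω | max (U 0 ω) (U 2 ω) ≤ x₁ ∧ max (U 1 ω) (U 2 ω) ≤ x₂} =
      P {ω | U 0 ω ≤ x₁} * P {ω | U 1 ω ≤ x₂} * P {ω | U 2 ω ≤ min x₁ x₂} := by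
  let t : Fin 3 → ℝ := ![x₁, x₂, min x₁ x₂]
  have hevent : {ω | max (U 0 ω) (U 2 ω) ≤ x₁ ∧ max (U 1 ω) (U 2 ω) ≤ x₂} =
      ⋂ i, {ω | U i ω ≤ t i} := by
    ext ω
    simp only [Set.mem_ofPred_eq, Set.mem_iInter, Fin.forall_fin_succ, IsEmpty.forall_iff,
      max_le_iff, t]
    simp only [Fin.succ_zero_eq_one, Fin.succ_one_eq_two, Matrix.cons_val_zero,
      Matrix.cons_val_one, Matrix.cons_val_two, Matrix.head_cons, Matrix.tail_cons,
      le_min_iff, and_true]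
    tauto
  rw [hevent, hindep.meas_iInter (s := fun i => {ω | U i ω ≤ t i})
    fun i => ⟨Set.Iic (t i), measurableSet_Iic, rfl⟩, Fin.prod_univ_three]
  rfl

theorem measure_max_le_and_max_le_eq_ofReal_rpow (hindep : iIndepFun U P) {F : ℝ → ℝ}
    {α : Fin 3 → ℝ} (hF : ∀ x, 0 < x → 0 ≤ F x)
    (hcdf : ∀ i x, 0 < x → P {ω | U i ω ≤ x} = ENNReal.ofReal (F x ^ α i))
    {x₁ x₂ : ℝ} (hx₁ : 0 < x₁) (hx₂ : 0 < x₂) :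
    P {ω | max (U 0 ω) (U 2 ω) ≤ x₁ ∧ max (U 1 ω) (U 2 ω) ≤ x₂} =
      ENNReal.ofReal (F x₁ ^ α 0 * F x₂ ^ α 1 * F (min x₁ x₂) ^ α 2) := by
  have h₁ : 0 ≤ F x₁ ^ α 0 := rpow_nonneg (hF x₁ hx₁) _
  have h₂ : 0 ≤ F x₂ ^ α 1 := rpow_nonneg (hF x₂ hx₂) _
  rw [hindep.measure_max_le_and_max_le_s18, hcdf 0 x₁ hx₁, hcdf 1 x₂ hx₂,
    hcdf 2 _ (lt_min hx₁ hx₂), ← ENNReal.ofReal_mul h₁, ← ENNReal.ofReal_mul (mul_nonneg h₁ h₂)]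

end ProbabilityTheory.iIndepFun

theorem bglfr_joint_cdf_general
    {Ω : Type*} [MeasurableSpace Ω] (P : Measure Ω)
    (β γ : ℝ) (hβ : 0 < β) (hγ : 0 < γ)
    (α : Fin 3 → ℝ)
    (U : Fin 3 → Ω → ℝ)
    (hindep : iIndepFun U P)
    (hcdf_pos : ∀ i (x : ℝ), 0 ≤ x → P {ω | U i ω ≤ x} =
      ENNReal.ofReal ((1 - Real.exp (-β * x - (γ / 2) * x ^ (2 : ℕ))) ^ (α i))) :
    (∀ x₁ x₂ : ℝ, 0 < x₁ → x₁ ≤ x₂ →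
      P {ω | max (U 0 ω) (U 2 ω) ≤ x₁ ∧ max (U 1 ω) (U 2 ω) ≤ x₂} =
        ENNReal.ofReal
          ((1 - Real.exp (-β * x₁ - (γ / 2) * x₁ ^ (2 : ℕ))) ^ (α 0 + α 2) *
            (1 - Real.exp (-β * x₂ - (γ / 2) * x₂ ^ (2 : ℕ))) ^ α 1)) ∧
    (∀ x₁ x₂ : ℝ, 0 < x₂ → x₂ ≤ x₁ →
      P {ω | max (U 0 ω) (U 2 ω) ≤ x₁ ∧ max (U 1 ω) (U 2 ω) ≤ x₂} =
        ENNReal.ofReal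
          ((1 - Real.exp (-β * x₁ - (γ / 2) * x₁ ^ (2 : ℕ))) ^ α 0 *
            (1 - Real.exp (-β * x₂ - (γ / 2) * x₂ ^ (2 : ℕ))) ^ (α 1 + α 2))) := by
  have hF (x : ℝ) (hx : 0 < x) := one_sub_exp_linear_quadratic_pos hβ hγ hx
  have hjoint (x₁ x₂ : ℝ) (hx₁ : 0 < x₁) (hx₂ : 0 < x₂) :=
    hindep.measure_max_le_and_max_le_eq_ofReal_rpow (fun x hx => (hF x hx).le)
      (fun i x hx => hcdf_pos i x hx.le) hx₁ hx₂
  constructor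
  · intro x₁ x₂ hx₁ hle
    rw [hjoint x₁ x₂ hx₁ (hx₁.trans_le hle), min_eq_left hle, rpow_add (hF x₁ hx₁)]
    ring_nf
  · intro x₁ x₂ hx₂ hle
    rw [hjoint x₁ x₂ (hx₂.trans_le hle) hx₂, min_eq_right hle, rpow_add (hF x₂ hx₂)]
    ring_nf

/-- The bivariate generalized linear failure rate joint cdf. -/
theorem bglfr_joint_cdf
    {Ω : Type*} [MeasurableSpace Ω] (P : Measure Ω) [IsProbabilityMeasure P]
    (β γ : ℝ) (hβ : 0 < β) (hγ : 0 < γ)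
    (α : Fin 3 → ℝ) (hα : ∀ i, 0 < α i)
    (U : Fin 3 → Ω → ℝ) (hUmeas : ∀ i, Measurable (U i))
    (hindep : iIndepFun U P)
    (hcdf_pos : ∀ i (x : ℝ), 0 ≤ x → P {ω | U i ω ≤ x} =
      ENNReal.ofReal ((1 - Real.exp (-β * x - (γ / 2) * x ^ (2 : ℕ))) ^ (α i)))
    (hcdf_neg : ∀ i (x : ℝ), x < 0 → P {ω | U i ω ≤ x} = 0) :
    (∀ x₁ x₂ : ℝ, 0 < x₁ → x₁ ≤ x₂ →
      P {ω | max (U 0 ω) (U 2 ω) ≤ x₁ ∧ max (U 1 ω) (U 2 ω) ≤ x₂} =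
        ENNReal.ofReal
          ((1 - Real.exp (-β * x₁ - (γ / 2) * x₁ ^ (2 : ℕ))) ^ (α 0 + α 2) *
            (1 - Real.exp (-β * x₂ - (γ / 2) * x₂ ^ (2 : ℕ))) ^ α 1)) ∧
    (∀ x₁ x₂ : ℝ, 0 < x₂ → x₂ ≤ x₁ →
      P {ω | max (U 0 ω) (U 2 ω) ≤ x₁ ∧ max (U 1 ω) (U 2 ω) ≤ x₂} =
        ENNReal.ofReal
          ((1 - Real.exp (-β * x₁ - (γ / 2) * x₁ ^ (2 : ℕ))) ^ α 0 *
            (1 - Real.exp (-β * x₂ - (γ / 2) * x₂ ^ (2 : ℕ))) ^ (α 1 + α 2))) :=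
  bglfr_joint_cdf_general P β γ hβ hγ α U hindep hcdf_pos
end
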